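/- arXiv:1309.2023 — 7 statements merged into one kernel-verified Lean document; each statement's English description precedes it below -/
import Mathlib

section
/- Let D be a Banach algebra which is an essential ideal in a commutative Arens regular Banach algebra A (essential means the canonical representation of A on D by multiplication is injective). If multiplication by each element of A is a weakly compact operator on A, and D has a bounded approximate identity, then A = D. -/
/-!
Multiplication by `a` is weakly compact and the approximate identity `(e i)` is bounded, so the
net `a * e i` has a weak cluster point `y`. Being closed and convex, `D` is weakly closed, hence
`y ∈ D`. For `d ∈ D` we have `d * (a * e i) = e i * (a * d) → a * d` in norm, so `d * y = a * d`,
and essentiality of `D` forces `a = y`.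
-/

/-- A continuous linear map between normed spaces is weakly compact if the closure
(in the weak topology) of the image of the closed unit ball is weakly compact. -/
def IsWeaklyCompactOperator {E F : Type*} [NormedAddCommGroup E] [NormedSpace ℂ E]
    [NormedAddCommGroup F] [NormedSpace ℂ F] (T : E →L[ℂ] F) : Prop :=
  IsCompact (closure ((toWeakSpace ℂ F) '' (T '' Metric.closedBall 0 1)))

/-- A Banach algebra `A` is Arens regular iff for every functional `φ ∈ A*` the operator
`a ↦ (b ↦ φ (a * b))` from `A` to `A*` is weakly compact. -/
def ArensRegular (A : Type*) [NormedCommRing A] [NormedAlgebra ℂ A] : Prop :=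
  ∀ φ : A →L[ℂ] ℂ, IsWeaklyCompactOperator
    (((ContinuousLinearMap.compL ℂ A A ℂ) φ).comp (ContinuousLinearMap.mul ℂ A))

open Filter Topology

section WeakClusterPoints

variable {ι E F : Type*} [NormedAddCommGroup E] [NormedSpace ℂ E]
  [NormedAddCommGroup F] [NormedSpace ℂ F] {l : Filter ι} {u : ι → E}

theorem IsWeaklyCompactOperator.exists_clusterPt_of_norm_le {T : E →L[ℂ] F}
    (hT : IsWeaklyCompactOperator T) [l.NeBot] {C : ℝ} (hu : ∀ i, ‖u i‖ ≤ C) :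
    ∃ y : F, ClusterPt (toWeakSpace ℂ F y) (l.map (toWeakSpace ℂ F ∘ T ∘ u)) := by
  set c : ℝ := max C 1
  have hc : 0 < c := one_pos.trans_le (le_max_right C 1)
  have hball : ∀ i, (c : ℂ)⁻¹ • u i ∈ Metric.closedBall (0 : E) 1 := fun i => by
    rw [mem_closedBall_zero_iff, norm_smul, norm_inv, Complex.norm_real, Real.norm_of_nonneg hc.le,
      inv_mul_le_one₀ hc]
    exact (hu i).trans (le_max_left C 1)
  have hle : l.map (fun i => toWeakSpace ℂ F (T ((c : ℂ)⁻¹ • u i))) ≤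
      𝓟 (closure (toWeakSpace ℂ F '' (T '' Metric.closedBall 0 1))) :=
    le_principal_iff.2 <| mem_map.2 <| univ_mem' fun i =>
      subset_closure ⟨_, ⟨_, hball i, rfl⟩, rfl⟩
  obtain ⟨z, -, hz⟩ := hT.exists_clusterPt hle
  refine ⟨(toWeakSpace ℂ F).symm ((c : ℂ) • z), ?_⟩
  rw [LinearEquiv.apply_symm_apply]
  have hrescale : (fun w => (c : ℂ) • w) ∘ (fun i => toWeakSpace ℂ F (T ((c : ℂ)⁻¹ • u i))) =
      toWeakSpace ℂ F ∘ T ∘ u := by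
    funext i
    simp [smul_smul, hc.ne']
  exact hz.map (continuous_const_smul (c : ℂ)).continuousAt
    (tendsto_map'_iff.2 (hrescale ▸ tendsto_map))

theorem ClusterPt.toWeakSpace_map (L : E →L[ℂ] F) {y : E}
    (hy : ClusterPt (toWeakSpace ℂ E y) (l.map (toWeakSpace ℂ E ∘ u))) :
    ClusterPt (toWeakSpace ℂ F (L y)) (l.map (toWeakSpace ℂ F ∘ L ∘ u)) :=
  hy.map (WeakSpace.map L).continuous.continuousAt (tendsto_map'_iff.2 tendsto_map)

theorem ClusterPt.toWeakSpace_eq_of_tendsto {y z : E}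
    (hy : ClusterPt (toWeakSpace ℂ E y) (l.map (toWeakSpace ℂ E ∘ u)))
    (hu : Tendsto u l (𝓝 z)) : y = z :=
  (toWeakSpace ℂ E).injective <| eq_of_nhds_neBot <|
    hy.mono (((toWeakSpaceCLM ℂ E).continuous.tendsto z).comp hu)

theorem ClusterPt.toWeakSpace_mem {s : Set E} (hs : Convex ℝ s) (hsc : IsClosed s)
    (hus : ∀ i, u i ∈ s) {y : E}
    (hy : ClusterPt (toWeakSpace ℂ E y) (l.map (toWeakSpace ℂ E ∘ u))) : y ∈ s := by
  have hclosed : IsClosed (toWeakSpace ℂ E '' s) := by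
    rw [← hsc.closure_eq, hs.toWeakSpace_closure ℂ]
    exact isClosed_closure
  obtain ⟨x, hx, hxy⟩ : toWeakSpace ℂ E y ∈ toWeakSpace ℂ E '' s :=
    hclosed.closure_eq ▸ mem_closure_iff_clusterPt.2
      (hy.mono (le_principal_iff.2 <| mem_map.2 <| univ_mem' fun i => ⟨u i, hus i, rfl⟩))
  rwa [(toWeakSpace ℂ E).injective hxy] at hx

end WeakClusterPoints

theorem essential_ideal_with_bai_eq_of_weaklyCompact_general
    {A : Type*} [NormedCommRing A] [NormedAlgebra ℂ A]
    (D : Ideal A) (hDclosed : IsClosed (D : Set A))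
    (hess : ∀ a : A, (∀ d ∈ D, a * d = 0) → a = 0)
    (hwc : ∀ a : A, IsWeaklyCompactOperator (ContinuousLinearMap.mul ℂ A a))
    (hbai : ∃ (C : ℝ) (ι : Type) (l : Filter ι) (e : ι → A), l.NeBot ∧
      (∀ i, e i ∈ D ∧ ‖e i‖ ≤ C) ∧
      ∀ d ∈ D, Filter.Tendsto (fun i => e i * d) l (nhds d)) :
    ∀ a : A, a ∈ D := by
  intro a
  obtain ⟨C, ι, l, e, hl, he, htend⟩ := hbai
  have := hl
  obtain ⟨y, hy⟩ := (hwc a).exists_clusterPt_of_norm_le (l := l) (u := e) fun i => (he i).2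
  have hyD : y ∈ D :=
    hy.toWeakSpace_mem (D.restrictScalars ℝ).convex hDclosed fun i => D.mul_mem_left a (he i).1
  have hmul : ∀ d ∈ D, d * y = a * d := fun d hd =>
    (hy.toWeakSpace_map (ContinuousLinearMap.mul ℂ A d)).toWeakSpace_eq_of_tendsto <|
      (htend (a * d) (D.mul_mem_left a hd)).congr fun i => by
        simp only [Function.comp_apply, ContinuousLinearMap.mul_apply']
        ring
  have hay : a = y :=
    sub_eq_zero.1 <| hess _ fun d hd => by rw [sub_mul, mul_comm y, hmul d hd, sub_self]
  exact hay ▸ hyD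

/-- If `D` is an essential closed ideal with a bounded approximate identity
in a commutative Arens regular Banach algebra `A`, and multiplication by every element of
`A` is a weakly compact operator on `A`, then `A = D`. -/
theorem essential_ideal_with_bai_eq_of_weaklyCompact
    {A : Type*} [NormedCommRing A] [NormedAlgebra ℂ A] [CompleteSpace A]
    (hreg : ArensRegular A)
    (D : Ideal A) (hDclosed : IsClosed (D : Set A))
    (hess : ∀ a : A, (∀ d ∈ D, a * d = 0) → a = 0)
    (hwc : ∀ a : A, IsWeaklyCompactOperator (ContinuousLinearMap.mul ℂ A a))
    (hbai : ∃ (C : ℝ) (ι : Type) (l : Filter ι) (e : ι → A), l.NeBot ∧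
      (∀ i, e i ∈ D ∧ ‖e i‖ ≤ C) ∧
      ∀ d ∈ D, Filter.Tendsto (fun i => e i * d) l (nhds d)) :
    ∀ a : A, a ∈ D :=
  essential_ideal_with_bai_eq_of_weaklyCompact_general D hDclosed hess hwc hbai
end

section
/- Let A be a Banach algebra generated (as a closed subalgebra) by a set {g} ∪ {e_m : m ∈ ℕ}, where e_m = 2^m g e_m for each m. Suppose (x_n) is a bounded sequence in A with ‖x_n‖ ≤ 1 for all n and ‖x_n g − g‖ → 0. Then (x_n) is a contractive approximate identity for A, i.e., ‖x_n a − a‖ → 0 for every a ∈ A. -/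
/-!
The set of `a` with `x n * a → a` is a non-unital subalgebra, indeed a right ideal, so it
contains `e m = 2 ^ m • (g * e m)` as soon as it contains `g`. Since the maps `a ↦ x n * a` are
uniformly Lipschitz, hence equicontinuous, the set is also closed, so it contains the closure of
the subalgebra generated by `g` and the `e m`, which is everything.
-/

open Filter Topology

section LeftApproxUnit

variable (𝕜 : Type*) {A ι : Type*} [CommSemiring 𝕜] [NonUnitalSemiring A] [Module 𝕜 A]
  [SMulCommClass 𝕜 A A] [TopologicalSpace A] [ContinuousAdd A] [ContinuousMul A]
  [ContinuousConstSMul 𝕜 A]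

def leftApproxUnitSubalgebra (x : ι → A) (l : Filter ι) : NonUnitalSubalgebra 𝕜 A where
  carrier := {a | Tendsto (fun i ↦ x i * a) l (𝓝 a)}
  add_mem' {a b} ha hb := by simpa only [Set.mem_ofPred_eq, mul_add] using ha.add hb
  zero_mem' := by simpa only [Set.mem_ofPred_eq, mul_zero] using tendsto_const_nhds
  mul_mem' {a b} ha _ := by simpa only [Set.mem_ofPred_eq, mul_assoc] using ha.mul_const b
  smul_mem' c a ha := by simpa only [Set.mem_ofPred_eq, mul_smul_comm] using ha.const_smul c

variable {𝕜}

theorem mem_leftApproxUnitSubalgebra {x : ι → A} {l : Filter ι} {a : A} :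
    a ∈ leftApproxUnitSubalgebra 𝕜 x l ↔ Tendsto (fun i ↦ x i * a) l (𝓝 a) :=
  Iff.rfl

theorem mul_mem_leftApproxUnitSubalgebra {x : ι → A} {l : Filter ι} {a : A}
    (ha : a ∈ leftApproxUnitSubalgebra 𝕜 x l) (b : A) :
    a * b ∈ leftApproxUnitSubalgebra 𝕜 x l := by
  simpa only [mem_leftApproxUnitSubalgebra, mul_assoc] using ha.mul_const b

end LeftApproxUnit

theorem isClosed_setOf_tendsto_mul_left {A ι : Type*} [NonUnitalSeminormedRing A] (x : ι → A)
    (l : Filter ι) {C : ℝ} (hx : ∀ i, ‖x i‖ ≤ C) :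
    IsClosed {a : A | Tendsto (fun i ↦ x i * a) l (𝓝 a)} := by
  have hlip (i : ι) : LipschitzWith C.toNNReal (x i * ·) :=
    AddMonoidHomClass.lipschitz_of_bound (AddMonoidHom.mulLeft (x i)) C fun a ↦
      (norm_mul_le _ _).trans (mul_le_mul_of_nonneg_right (hx i) (norm_nonneg a))
  exact (LipschitzWith.uniformEquicontinuous _ _ hlip).equicontinuous.isClosed_setOfPred_tendsto
    continuous_id

theorem tendsto_mul_left_of_dense_adjoin {𝕜 A ι : Type*} [CommSemiring 𝕜]
    [NonUnitalSeminormedRing A] [Module 𝕜 A] [IsScalarTower 𝕜 A A] [SMulCommClass 𝕜 A A]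
    [ContinuousConstSMul 𝕜 A] {s : Set A} (hs : Dense (NonUnitalAlgebra.adjoin 𝕜 s : Set A))
    {x : ι → A} {l : Filter ι} {C : ℝ} (hx : ∀ i, ‖x i‖ ≤ C)
    (hxs : ∀ b ∈ s, Tendsto (fun i ↦ x i * b) l (𝓝 b)) (a : A) :
    Tendsto (fun i ↦ x i * a) l (𝓝 a) := by
  have hadjoin : NonUnitalAlgebra.adjoin 𝕜 s ≤ leftApproxUnitSubalgebra 𝕜 x l :=
    NonUnitalAlgebra.adjoin_le hxs
  exact closure_minimal hadjoin (isClosed_setOf_tendsto_mul_left x l hx) (hs a)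

theorem cai_from_generators_general
    {A : Type*} [NonUnitalNormedCommRing A] [NormedSpace ℂ A]
    [IsScalarTower ℂ A A] [SMulCommClass ℂ A A]
    (g : A) (e : ℕ → A)
    (he : ∀ m : ℕ, e m = ((2 : ℂ) ^ m) • (g * e m))
    (hgen : closure ((NonUnitalAlgebra.adjoin ℂ ({g} ∪ Set.range e) :
        NonUnitalSubalgebra ℂ A) : Set A) = Set.univ)
    (x : ℕ → A) (hx : ∀ n, ‖x n‖ ≤ 1)
    (hxg : Filter.Tendsto (fun n => x n * g) Filter.atTop (nhds g)) :
    ∀ a : A, Filter.Tendsto (fun n => x n * a) Filter.atTop (nhds a) := by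
  have hg : g ∈ leftApproxUnitSubalgebra ℂ x atTop := hxg
  refine tendsto_mul_left_of_dense_adjoin (dense_iff_closure_eq.mpr hgen) hx ?_
  rintro b (rfl | ⟨m, rfl⟩)
  · exact hg
  · rw [he m]
    exact SMulMemClass.smul_mem _ (mul_mem_leftApproxUnitSubalgebra hg (e m))

/-- If a (non-unital) commutative Banach algebra `A` is topologically
generated by `{g} ∪ {eₘ : m ∈ ℕ}` where `eₘ = 2^m g eₘ`, and `(xₙ)` is a sequence of
contractions with `xₙ g → g`, then `(xₙ)` is a contractive approximate identity. -/
theorem cai_from_generators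
    {A : Type*} [NonUnitalNormedCommRing A] [NormedSpace ℂ A]
    [IsScalarTower ℂ A A] [SMulCommClass ℂ A A] [CompleteSpace A]
    (g : A) (e : ℕ → A)
    (he : ∀ m : ℕ, e m = ((2 : ℂ) ^ m) • (g * e m))
    (hgen : closure ((NonUnitalAlgebra.adjoin ℂ ({g} ∪ Set.range e) :
        NonUnitalSubalgebra ℂ A) : Set A) = Set.univ)
    (x : ℕ → A) (hx : ∀ n, ‖x n‖ ≤ 1)
    (hxg : Filter.Tendsto (fun n => x n * g) Filter.atTop (nhds g)) :
    ∀ a : A, Filter.Tendsto (fun n => x n * a) Filter.atTop (nhds a) :=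
  cai_from_generators_general g e he hgen x hx hxg
end

section
/- Let (a_j) be a strictly increasing sequence of positive integers such that a_{j+1} > 2 a_j (1 + a_1 + a_2 + ⋯ + a_j) for every j. Then for all n and all integers t_1, …, t_n with |t_i| ≤ 2a_i, the sum Σ_{i=1}^n t_i a_i is positive if and only if t_r > 0, where r = max{ j : t_j ≠ 0 }. -/
/-!
Write `∑ tᵢ aᵢ = P + t_r a_r` with `P = ∑_{i<r} tᵢ aᵢ`. The growth condition makes
`|P| ≤ 2 a_{r-1} (a₀ + ⋯ + a_{r-1}) < a_r`, so the last nonzero term decides the sign.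
-/

open Finset

theorem Int.pos_add_mul_iff_of_abs_lt {p t b : ℤ} (hp : |p| < b) (ht : t ≠ 0) :
    0 < p + t * b ↔ 0 < t := by
  obtain ⟨hp₁, hp₂⟩ := abs_lt.1 hp
  constructor
  · intro h
    by_contra! hle
    have : t * b ≤ -b := by nlinarith [show t ≤ -1 by omega]
    linarith
  · intro h
    have : b ≤ t * b := by nlinarith
    linarith

section RapidGrowth

variable {a : ℕ → ℕ} (hgrow : ∀ j, 2 * a j * (1 + ∑ i ∈ range (j + 1), a i) < a (j + 1))
include hgrow

theorem monotone_of_rapid_growth : Monotone a := by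
  refine monotone_nat_of_le_succ fun j => ?_
  have : a j ≤ 2 * a j * (1 + ∑ i ∈ range (j + 1), a i) := by
    nlinarith [Nat.zero_le (∑ i ∈ range (j + 1), a i)]
  exact this.trans (hgrow j).le

theorem two_mul_sum_mul_self_lt_of_rapid_growth (j : ℕ) :
    2 * ∑ i ∈ range (j + 1), a i * a i < a (j + 1) := by
  have hle : ∑ i ∈ range (j + 1), a i * a i ≤ a j * ∑ i ∈ range (j + 1), a i := by
    rw [mul_sum]
    refine sum_le_sum fun i hi => Nat.mul_le_mul_right _ ?_
    exact monotone_of_rapid_growth hgrow (Nat.lt_succ_iff.1 (mem_range.1 hi))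
  nlinarith [hgrow j]

theorem abs_sum_mul_lt_of_rapid_growth {t : ℕ → ℤ} {r : ℕ}
    (ht : ∀ i < r, |t i| ≤ 2 * (a i : ℤ)) (hr : 0 < a r) :
    |∑ i ∈ range r, t i * (a i : ℤ)| < a r := by
  cases r with
  | zero => simpa using hr
  | succ j =>
    calc |∑ i ∈ range (j + 1), t i * (a i : ℤ)|
        ≤ ∑ i ∈ range (j + 1), |t i| * (a i : ℤ) := by
          simpa only [abs_mul, Nat.abs_cast] using
            abs_sum_le_sum_abs (fun i => t i * (a i : ℤ)) (range (j + 1))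
      _ ≤ ∑ i ∈ range (j + 1), 2 * (a i : ℤ) * a i :=
          sum_le_sum fun i hi => by gcongr; exact ht i (mem_range.1 hi)
      _ = ((2 * ∑ i ∈ range (j + 1), a i * a i : ℕ) : ℤ) := by
          push_cast; rw [mul_sum]; simp only [mul_assoc]
      _ < a (j + 1) := by exact_mod_cast two_mul_sum_mul_self_lt_of_rapid_growth hgrow j

end RapidGrowth

theorem sum_range_eq_of_eq_zero_of_lt {t : ℕ → ℤ} {r n : ℕ} (hrn : r < n)
    (hzero : ∀ j, r < j → j < n → t j = 0) :
    ∑ i ∈ range n, t i = ∑ i ∈ range r, t i + t r := by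
  rw [← sum_range_succ]
  refine (sum_subset (range_subset_range.2 hrn) fun j hj hj' => ?_).symm
  simp only [mem_range, not_lt] at hj hj'
  exact hzero j hj' hj

theorem lex_order_of_rapidly_increasing_general
    (a : ℕ → ℕ)
    (hgrow : ∀ j, 2 * a j * (1 + ∑ i ∈ Finset.range (j + 1), a i) < a (j + 1)) :
    ∀ (n : ℕ) (t : ℕ → ℤ), (∀ i < n, |t i| ≤ 2 * (a i : ℤ)) →
      ∀ r < n, t r ≠ 0 → (∀ j, r < j → j < n → t j = 0) →
      (0 < ∑ i ∈ Finset.range n, t i * (a i : ℤ) ↔ 0 < t r) := by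
  intro n t ht r hrn htr hzero
  have har : (0 : ℤ) < a r := by
    have := ht r hrn
    have := abs_pos.2 htr
    omega
  rw [sum_range_eq_of_eq_zero_of_lt hrn fun j hrj hjn => by simp [hzero j hrj hjn]]
  exact Int.pos_add_mul_iff_of_abs_lt
    (abs_sum_mul_lt_of_rapid_growth hgrow (fun i hi => ht i (hi.trans hrn)) (by exact_mod_cast har))
    htr

/-- If `(aⱼ)` is strictly increasing with
`a_{j+1} > 2 aⱼ (1 + a₀ + ⋯ + aⱼ)`, then for integer coefficients `tᵢ` with
`|tᵢ| ≤ 2 aᵢ`, the sum `Σ tᵢ aᵢ` is positive iff `t_r > 0`, where `r` is the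
largest index with `t_r ≠ 0` ("lexicographic order"). -/
theorem lex_order_of_rapidly_increasing
    (a : ℕ → ℕ) (hpos : ∀ j, 0 < a j) (hmono : StrictMono a)
    (hgrow : ∀ j, 2 * a j * (1 + ∑ i ∈ Finset.range (j + 1), a i) < a (j + 1)) :
    ∀ (n : ℕ) (t : ℕ → ℤ), (∀ i < n, |t i| ≤ 2 * (a i : ℤ)) →
      ∀ r < n, t r ≠ 0 → (∀ j, r < j → j < n → t j = 0) →
      (0 < ∑ i ∈ Finset.range n, t i * (a i : ℤ) ↔ 0 < t r) :=
  lex_order_of_rapidly_increasing_general a hgrow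
end

section
/- Let A be a commutative algebra with a finite generating set G₀ each element of which has spectral radius strictly less than 1 with respect to some algebra norm on A. Then there exists an algebra norm ‖·‖ on A such that ‖s‖ < 1 for every s ∈ G₀. -/
/-!
Choose `ρ < 1` above the spectral radii of all generators. The powers of each `ρ⁻¹ • s` are
bounded, so, `A` being commutative, the monoid `S` they generate is bounded, and
`N₀ x = sup_{w ∈ S} ‖w * x‖` is a submultiplicative norm with `N₀ (s * y) ≤ ρ * N₀ y`. The operator
norm of left multiplication with respect to `N₀` (Mathlib's `seminormFromBounded'`) is then an
algebra norm in which every generator has norm at most `ρ`.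
-/

open Filter Bornology Topology

theorem Finset.exists_pos_lt_forall_lt {ι : Type*} (s : Finset ι) {f : ι → ℝ} {b : ℝ}
    (hb : 0 < b) (h : ∀ i ∈ s, f i < b) : ∃ r, 0 < r ∧ r < b ∧ ∀ i ∈ s, f i < r := by
  have hlt : ∀ᶠ r in 𝓝[<] b, r < b := self_mem_nhdsWithin
  have hpos : ∀ᶠ r in 𝓝[<] b, 0 < r := nhdsWithin_le_nhds (eventually_gt_nhds hb)
  have hf : ∀ᶠ r in 𝓝[<] b, ∀ i ∈ s, f i < r :=
    s.eventually_all.2 fun i hi => nhdsWithin_le_nhds (eventually_gt_nhds (h i hi))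
  exact (hpos.and (hlt.and hf)).exists

section PowerBound

variable {𝕜 A : Type*} [NormedField 𝕜] [SeminormedRing A] [NormedAlgebra 𝕜 A]

theorem isBoundedUnder_norm_pow_rpow_inv (a : A) :
    IsBoundedUnder (· ≤ ·) atTop (fun k : ℕ => ‖a ^ k‖ ^ (1 / (k : ℝ))) := by
  refine isBoundedUnder_of_eventually_le (a := ‖a‖) <|
    eventually_atTop.2 ⟨1, fun k hk => ?_⟩
  calc ‖a ^ k‖ ^ (1 / (k : ℝ)) ≤ (‖a‖ ^ k) ^ (1 / (k : ℝ)) := by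
        gcongr; exact norm_pow_le' a hk
    _ = ‖a‖ := by
        rw [one_div, Real.pow_rpow_inv_natCast (norm_nonneg a) (by omega)]

theorem eventually_norm_pow_lt_pow {a : A} {r : ℝ}
    (h : limsup (fun k : ℕ => ‖a ^ k‖ ^ (1 / (k : ℝ))) atTop < r) :
    ∀ᶠ k : ℕ in atTop, ‖a ^ k‖ < r ^ k := by
  filter_upwards [eventually_lt_of_limsup_lt h (isBoundedUnder_norm_pow_rpow_inv a),
    eventually_ne_atTop 0] with k hk hk0
  calc ‖a ^ k‖ = (‖a ^ k‖ ^ (1 / (k : ℝ))) ^ k := by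
        rw [one_div, Real.rpow_inv_natCast_pow (norm_nonneg _) hk0]
    _ < r ^ k := by gcongr

theorem isBounded_range_pow_inv_smul {a : A} {c : 𝕜}
    (h : limsup (fun k : ℕ => ‖a ^ k‖ ^ (1 / (k : ℝ))) atTop < ‖c‖) :
    IsBounded (Set.range fun k : ℕ => (c⁻¹ • a) ^ k) := by
  have hle : ∀ᶠ k : ℕ in atTop, ‖(c⁻¹ • a) ^ k‖ ≤ 1 := by
    filter_upwards [eventually_norm_pow_lt_pow h] with k hk
    rw [smul_pow, norm_smul, norm_pow, norm_inv, inv_pow,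
      inv_mul_le_one₀ ((norm_nonneg _).trans_lt hk)]
    exact hk.le
  obtain ⟨C, hC⟩ := (isBoundedUnder_of_eventually_le hle).bddAbove_range
  exact isBounded_iff_forall_norm_le.2 ⟨C, by rintro _ ⟨k, rfl⟩; exact hC ⟨k, rfl⟩⟩

end PowerBound

theorem Submonoid.isBounded_closure_finset {A : Type*} [SeminormedCommRing A]
    (s : Finset A) (hs : ∀ a ∈ s, IsBounded (Set.range fun k : ℕ => a ^ k)) :
    IsBounded (closure (s : Set A) : Set A) := by
  classical
  induction s using Finset.induction_on with
  | empty => simp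
  | insert a s _ ih =>
    rw [Finset.coe_insert, Set.insert_eq, closure_union, coe_sup, ← powers_eq_closure,
      coe_powers]
    exact isBounded_mul (hs a (s.mem_insert_self a))
      (ih fun b hb => hs b (Finset.mem_insert_of_mem hb))

namespace Submonoid

section SeminormedRing

variable {A : Type*} [SeminormedRing A]

noncomputable def orbitNorm (S : Submonoid A) (x : A) : ℝ := ⨆ w : S, ‖(w : A) * x‖

variable {S : Submonoid A}

theorem bddAbove_range_norm_mul (hS : IsBounded (S : Set A)) (x : A) :
    BddAbove (Set.range fun w : S => ‖(w : A) * x‖) := by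
  obtain ⟨C, hC⟩ := hS.exists_norm_le
  refine ⟨C * ‖x‖, ?_⟩
  rintro _ ⟨w, rfl⟩
  exact (norm_mul_le _ _).trans (by gcongr; exact hC w w.2)

theorem norm_mul_le_orbitNorm (hS : IsBounded (S : Set A)) (x : A) {w : A} (hw : w ∈ S) :
    ‖w * x‖ ≤ S.orbitNorm x :=
  le_ciSup (f := fun w : S => ‖(w : A) * x‖) (bddAbove_range_norm_mul hS x) ⟨w, hw⟩

theorem norm_le_orbitNorm (hS : IsBounded (S : Set A)) (x : A) : ‖x‖ ≤ S.orbitNorm x := by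
  simpa using norm_mul_le_orbitNorm hS x S.one_mem

theorem orbitNorm_nonneg (hS : IsBounded (S : Set A)) (x : A) : 0 ≤ S.orbitNorm x :=
  (norm_nonneg x).trans (norm_le_orbitNorm hS x)

theorem orbitNorm_add_le (hS : IsBounded (S : Set A)) (x y : A) :
    S.orbitNorm (x + y) ≤ S.orbitNorm x + S.orbitNorm y :=
  ciSup_le fun w => (mul_add (w : A) x y ▸ norm_add_le _ _).trans <|
    add_le_add (norm_mul_le_orbitNorm hS x w.2) (norm_mul_le_orbitNorm hS y w.2)

theorem orbitNorm_mul_le (hS : IsBounded (S : Set A)) (x y : A) :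
    S.orbitNorm (x * y) ≤ S.orbitNorm x * S.orbitNorm y :=
  ciSup_le fun w => calc
    ‖(w : A) * (x * y)‖ ≤ ‖(w : A) * x‖ * ‖y‖ := mul_assoc (w : A) x y ▸ norm_mul_le _ _
    _ ≤ S.orbitNorm x * S.orbitNorm y :=
      mul_le_mul (norm_mul_le_orbitNorm hS x w.2) (norm_le_orbitNorm hS y) (norm_nonneg y)
        (orbitNorm_nonneg hS x)

variable {𝕜 : Type*} [NormedField 𝕜] [NormedAlgebra 𝕜 A]

theorem orbitNorm_smul (c : 𝕜) (x : A) : S.orbitNorm (c • x) = ‖c‖ * S.orbitNorm x := by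
  simp only [orbitNorm, mul_smul_comm, norm_smul, Real.mul_iSup_of_nonneg (norm_nonneg c)]

theorem orbitNorm_mul_le_of_inv_smul_mem (hS : IsBounded (S : Set A)) {c : 𝕜} (hc : c ≠ 0)
    {a : A} (ha : c⁻¹ • a ∈ S) (y : A) : S.orbitNorm (a * y) ≤ ‖c‖ * S.orbitNorm y :=
  ciSup_le fun w => calc
    ‖(w : A) * (a * y)‖ = ‖c‖ * ‖(w * (c⁻¹ • a)) * y‖ := by
      rw [← norm_smul, ← smul_mul_assoc, ← mul_smul_comm, smul_inv_smul₀ hc,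
        mul_assoc]
    _ ≤ ‖c‖ * S.orbitNorm y := by
      gcongr; exact norm_mul_le_orbitNorm hS y (S.mul_mem w.2 ha)

end SeminormedRing

theorem orbitNorm_eq_zero_iff {A : Type*} [NormedRing A] {S : Submonoid A}
    (hS : IsBounded (S : Set A)) {x : A} : S.orbitNorm x = 0 ↔ x = 0 := by
  refine ⟨fun h => norm_le_zero_iff.1 (h ▸ norm_le_orbitNorm hS x), ?_⟩
  rintro rfl
  simp [orbitNorm]

end Submonoid

section SeminormFromBounded

variable {R : Type*} [CommRing R] {f : R → ℝ}

theorem seminormFromBounded_smul {𝕜 : Type*} [SeminormedRing 𝕜] [Module 𝕜 R]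
    [IsScalarTower 𝕜 R R] (hf : ∀ (c : 𝕜) x, f (c • x) = ‖c‖ * f x) (c : 𝕜) (x : R) :
    seminormFromBounded' f (c • x) = ‖c‖ * seminormFromBounded' f x := by
  simp only [seminormFromBounded', smul_mul_assoc, hf, mul_div_assoc,
    Real.mul_iSup_of_nonneg (norm_nonneg c)]

theorem seminormFromBounded_le_of_mul_le (f_nonneg : 0 ≤ f) {a : R} {r : ℝ} (hr : 0 ≤ r)
    (h : ∀ y, f (a * y) ≤ r * f y) : seminormFromBounded' f a ≤ r := by
  refine ciSup_le fun y => ?_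
  rcases (f_nonneg y).eq_or_lt with hy | hy
  · simpa [← hy] using hr
  · exact div_le_of_le_mul₀ hy.le hr (h y)

end SeminormFromBounded

theorem renorm_generators_below_one_general
    {A : Type*} [NormedCommRing A] [NormedAlgebra ℂ A]
    (G₀ : Finset A)
    (hsr : ∀ s ∈ G₀, Filter.limsup (fun k : ℕ => ‖s ^ k‖ ^ (1 / (k : ℝ)))
      Filter.atTop < 1) :
    ∃ N : A → ℝ,
      (∀ x, 0 ≤ N x) ∧
      (∀ x, N x = 0 ↔ x = 0) ∧
      (∀ x y, N (x + y) ≤ N x + N y) ∧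
      (∀ (c : ℂ) (x : A), N (c • x) = ‖c‖ * N x) ∧
      (∀ x y, N (x * y) ≤ N x * N y) ∧
      (∀ s ∈ G₀, N s < 1) := by
  classical
  obtain ⟨ρ, hρ₀, hρ₁, hρ⟩ := G₀.exists_pos_lt_forall_lt one_pos hsr
  have hc : ‖(ρ : ℂ)‖ = ρ := Complex.norm_of_nonneg hρ₀.le
  set S := Submonoid.closure ((G₀.image ((ρ : ℂ)⁻¹ • ·) : Finset A) : Set A)
  have hS : IsBounded (S : Set A) := Submonoid.isBounded_closure_finset _ <| by
    simpa only [Finset.forall_mem_image] using fun s hs =>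
      isBounded_range_pow_inv_smul (c := (ρ : ℂ)) (hc.symm ▸ hρ s hs)
  have hnonneg : 0 ≤ S.orbitNorm := Submonoid.orbitNorm_nonneg hS
  have hmul : ∀ x y, S.orbitNorm (x * y) ≤ 1 * S.orbitNorm x * S.orbitNorm y := by
    simpa only [one_mul] using Submonoid.orbitNorm_mul_le hS
  refine ⟨seminormFromBounded' S.orbitNorm, seminormFromBounded_nonneg hnonneg hmul,
    fun x => (seminormFromBounded_eq_zero_iff hnonneg hmul x).trans
      (Submonoid.orbitNorm_eq_zero_iff hS),
    seminormFromBounded_add hnonneg hmul (Submonoid.orbitNorm_add_le hS),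
    seminormFromBounded_smul Submonoid.orbitNorm_smul, seminormFromBounded_mul hnonneg hmul,
    fun s hs => (seminormFromBounded_le_of_mul_le hnonneg hρ₀.le fun y => ?_).trans_lt hρ₁⟩
  exact hc ▸ Submonoid.orbitNorm_mul_le_of_inv_smul_mem hS (by exact_mod_cast hρ₀.ne')
    (Submonoid.subset_closure (Finset.mem_image_of_mem _ hs)) y

/-- A commutative normed algebra algebraically generated by a finite set
`G₀` of elements of spectral radius (computed via `lim ‖s^k‖^{1/k}`) strictly less
than 1 admits an algebra norm in which every generator has norm strictly less than 1. -/
theorem renorm_generators_below_one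
    {A : Type*} [NormedCommRing A] [NormedAlgebra ℂ A]
    (G₀ : Finset A) (hgen : Algebra.adjoin ℂ (G₀ : Set A) = ⊤)
    (hsr : ∀ s ∈ G₀, Filter.limsup (fun k : ℕ => ‖s ^ k‖ ^ (1 / (k : ℝ)))
      Filter.atTop < 1) :
    ∃ N : A → ℝ,
      (∀ x, 0 ≤ N x) ∧
      (∀ x, N x = 0 ↔ x = 0) ∧
      (∀ x y, N (x + y) ≤ N x + N y) ∧
      (∀ (c : ℂ) (x : A), N (c • x) = ‖c‖ * N x) ∧
      (∀ x y, N (x * y) ≤ N x * N y) ∧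
      (∀ s ∈ G₀, N s < 1) :=
  renorm_generators_below_one_general G₀ hsr
end

section
/- Let H be a normed space, S a finite subset of bounded operators on H each of norm at most 1 that commute, φ a bounded linear functional on H, and for x ∈ H define N(x)² = Σ over index functions i: S → ℕ₀ of |φ((∏_{s∈S} s^{i(s)}) x)|², assumed finite for all x. Then for each s₀ ∈ S and x ∈ H, N(s₀ x) ≤ N(x). -/
open scoped BigOperators

/-- The product `∏_{s ∈ S} s^{f s}` of powers of a finite commuting family of
operators. -/
noncomputable def prodPow {H ι : Type*} [Fintype ι]
    [NormedAddCommGroup H] [NormedSpace ℂ H]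
    (T : ι → H →L[ℂ] H) (hcomm : ∀ i j, Commute (T i) (T j)) (f : ι → ℕ) :
    H →L[ℂ] H :=
  Finset.univ.noncommProd (fun i => T i ^ f i)
    (fun i _ j _ _ => Commute.pow_pow (hcomm i j) _ _)

/-!
Writing `T^f` for `prodPow T hcomm f`, commutativity gives `T^f (s₀ x) = T^(f + δ_{s₀}) x`,
so the series defining `N(s₀ x)²` is the subseries of the one defining `N(x)²` indexed by the
image of the injective shift `f ↦ f + δ_{s₀}`; its terms are nonnegative.
-/

section prodPow

variable {H ι : Type*} [Fintype ι] [NormedAddCommGroup H] [NormedSpace ℂ H]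
  (T : ι → H →L[ℂ] H) (hcomm : ∀ i j, Commute (T i) (T j))

theorem prodPow_add (f g : ι → ℕ) :
    prodPow T hcomm (f + g) = prodPow T hcomm f * prodPow T hcomm g := by
  simp only [prodPow, Pi.add_apply, pow_add]
  exact Finset.noncommProd_mul_distrib _ _ _ _
    (fun i _ j _ _ => Commute.pow_pow (hcomm i j) _ _)

theorem prodPow_single [DecidableEq ι] (i : ι) (n : ℕ) :
    prodPow T hcomm (Pi.single i n) = T i ^ n := by
  refine (Finset.noncommProd_erase_mul Finset.univ (Finset.mem_univ i)
    (fun j => T j ^ Pi.single i n j) _).symm.trans ?_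
  refine (congrArg (· * _) (Finset.noncommProd_eq_pow_card _ _ _ 1 fun j hj => ?_)).trans ?_
  · simp [(Finset.mem_erase.1 hj).1]
  · simp

theorem prodPow_apply_eq_prodPow_add_single_apply [DecidableEq ι] (f : ι → ℕ) (i : ι) (x : H) :
    prodPow T hcomm f (T i x) = prodPow T hcomm (f + Pi.single i 1) x := by
  rw [prodPow_add, prodPow_single, pow_one]
  rfl

end prodPow

theorem seminorm_decreases_under_generators_general
    {H ι : Type*} [Fintype ι] [NormedAddCommGroup H] [NormedSpace ℂ H]
    (T : ι → H →L[ℂ] H) (hcomm : ∀ i j, Commute (T i) (T j))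
    (φ : H →L[ℂ] ℂ)
    (hfin : ∀ x : H, Summable (fun f : ι → ℕ => ‖φ ((prodPow T hcomm f) x)‖ ^ 2))
    (i₀ : ι) (x : H) :
    ∑' f : ι → ℕ, ‖φ ((prodPow T hcomm f) (T i₀ x))‖ ^ 2 ≤
    ∑' f : ι → ℕ, ‖φ ((prodPow T hcomm f) x)‖ ^ 2 := by
  classical
  simp_rw [prodPow_apply_eq_prodPow_add_single_apply]
  exact tsum_comp_le_tsum_of_inj (hfin x) (fun _ => by positivity) (add_left_injective _)

/-- With `N(x)² = Σ_{f : S → ℕ} |φ((∏ s^{f s}) x)|²` (assumed finite)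
built from a finite commuting family `S` of contractions and a functional `φ`,
one has `N(s₀ x) ≤ N(x)` for every `s₀ ∈ S`. -/
theorem seminorm_decreases_under_generators
    {H ι : Type*} [Fintype ι] [NormedAddCommGroup H] [NormedSpace ℂ H]
    (T : ι → H →L[ℂ] H) (hcomm : ∀ i j, Commute (T i) (T j))
    (hnorm : ∀ i, ‖T i‖ ≤ 1) (φ : H →L[ℂ] ℂ)
    (hfin : ∀ x : H, Summable (fun f : ι → ℕ => ‖φ ((prodPow T hcomm f) x)‖ ^ 2))
    (i₀ : ι) (x : H) :
    ∑' f : ι → ℕ, ‖φ ((prodPow T hcomm f) (T i₀ x))‖ ^ 2 ≤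
    ∑' f : ι → ℕ, ‖φ ((prodPow T hcomm f) x)‖ ^ 2 :=
  seminorm_decreases_under_generators_general T hcomm φ hfin i₀ x
end

section
/- Let (a_k) be a strictly increasing sequence of positive integers with a_k² > 1 + 2^{2 + a_{k-1}²} for all k ≥ 2. Then for every n, Σ_{k=n+2}^∞ 2 (a_k² − 1)^{-1} 2^{a_{n+1}²} ≤ 1. -/
/-!
Put `m = a_{n+1}²`. Because `2^t` outgrows `t`, the growth condition propagates to
`a_{n+2+k}² ≥ 1 + 2^{2+k+m}` for all `k`, so the `k`-th term of the series is at most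
`2 · 2^{-(2+k+m)} · 2^m = 2^{-(k+1)}`, and these sum to `1`.
-/

theorem one_add_two_pow_add_le_of_growth (b : ℕ → ℕ) (h : ∀ k, 1 + 2 ^ (2 + b k) ≤ b (k + 1))
    (n k : ℕ) : 1 + 2 ^ (2 + k + b n) ≤ b (n + 1 + k) := by
  induction k with
  | zero => simpa using h n
  | succ k ih =>
    have hexp : 2 + (k + 1) + b n ≤ 2 + b (n + 1 + k) := by
      have := (2 + k + b n).lt_two_pow_self
      omega
    calc 1 + 2 ^ (2 + (k + 1) + b n) ≤ 1 + 2 ^ (2 + b (n + 1 + k)) := by gcongr; norm_num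
      _ ≤ b (n + 1 + (k + 1)) := h (n + 1 + k)

theorem two_div_sub_one_mul_two_pow_mem_Icc {x : ℝ} {k m : ℕ} (hx : 1 + 2 ^ (2 + k + m) ≤ x) :
    2 / (x - 1) * 2 ^ m ∈ Set.Icc 0 (1 / 2 / 2 ^ k) := by
  have hx' : 2 ^ (2 + k + m) ≤ x - 1 := by linarith
  have hx1 : 0 < x - 1 := lt_of_lt_of_le (by positivity) hx'
  refine ⟨by positivity, ?_⟩
  calc 2 / (x - 1) * 2 ^ m ≤ 2 / 2 ^ (2 + k + m) * 2 ^ m := by gcongr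
    _ = 1 / 2 / 2 ^ k := by rw [pow_add, pow_add]; field_simp

theorem tsum_le_of_mem_Icc_geometric_two {f : ℕ → ℝ} {c : ℝ}
    (hf : ∀ k, f k ∈ Set.Icc 0 (c / 2 / 2 ^ k)) : ∑' k, f k ≤ c := by
  have hsum : Summable f :=
    (summable_geometric_two' c).of_nonneg_of_le (fun k => (hf k).1) (fun k => (hf k).2)
  calc ∑' k, f k ≤ ∑' k : ℕ, c / 2 / 2 ^ k :=
        hsum.tsum_le_tsum (fun k => (hf k).2) (summable_geometric_two' c)
    _ = c := tsum_geometric_two' c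

theorem tail_sum_le_one_general
    (a : ℕ → ℕ)
    (hgrow : ∀ k, (1 : ℝ) + 2 ^ (2 + (a k) ^ 2) < ((a (k + 1)) ^ 2 : ℝ)) :
    ∀ n : ℕ,
      ∑' k : ℕ, (2 : ℝ) / (((a (n + 2 + k)) ^ 2 : ℝ) - 1) *
        2 ^ ((a (n + 1)) ^ 2) ≤ 1 := by
  intro n
  have hgrowNat : ∀ k, 1 + 2 ^ (2 + a k ^ 2) ≤ a (k + 1) ^ 2 := fun k => by
    exact_mod_cast (hgrow k).le
  have hbig (k : ℕ) : (1 : ℝ) + 2 ^ (2 + k + a (n + 1) ^ 2) ≤ (a (n + 2 + k) : ℝ) ^ 2 := by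
    exact_mod_cast one_add_two_pow_add_le_of_growth (fun j => a j ^ 2) hgrowNat (n + 1) k
  exact tsum_le_of_mem_Icc_geometric_two fun k => two_div_sub_one_mul_two_pow_mem_Icc (hbig k)

/-- If `(a_k)` is a strictly increasing sequence of positive integers
with `a_{k+1}² > 1 + 2^{2 + a_k²}`, then for every `n`,
`Σ_{k=n+2}^∞ 2 (a_k² − 1)⁻¹ 2^{a_{n+1}²} ≤ 1`. -/
theorem tail_sum_le_one
    (a : ℕ → ℕ) (hpos : ∀ k, 0 < a k) (hmono : StrictMono a)
    (hgrow : ∀ k, (1 : ℝ) + 2 ^ (2 + (a k) ^ 2) < ((a (k + 1)) ^ 2 : ℝ)) :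
    ∀ n : ℕ,
      ∑' k : ℕ, (2 : ℝ) / (((a (n + 2 + k)) ^ 2 : ℝ) - 1) *
        2 ^ ((a (n + 1)) ^ 2) ≤ 1 :=
  tail_sum_le_one_general a hgrow
end

section
/- Let A be a commutative semisimple Banach algebra whose character space is {χ_n : n ∈ ℕ} and suppose there is a bounded sequence (ψ_n) in A* with ψ_n(g) = 1 for all n, where each ψ_n lies in the linear span of {χ_j : a_n < j ≤ a_{n+1}} for a strictly increasing sequence (a_n) of positive integers, and there are elements e_j ∈ A with χ_i(e_j) = δ_{ij}. Then g is not in the closed linear span of {e_j : j ∈ ℕ}. -/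
/-!
If `g` were a limit of finite combinations `x` of the `e_j`, then, since `χ_i(e_j) = δ_{ij}`,
every character `χ_j` with `j` beyond the support of `x` kills `x`; as `a_n → ∞`, some `ψ_n`
is a combination of such characters, so `ψ_n x = 0` while `ψ_n g = 1`. Hence
`1 ≤ ‖ψ_n‖ ‖g - x‖ ≤ C ‖g - x‖`, which keeps `g` at distance at least `1 / C` from the span.
-/

open Filter

section Annihilators

variable {R M N : Type*} [Semiring R] [AddCommMonoid M] [Module R M]
  [AddCommMonoid N] [Module R N] {F : Type*} [FunLike F M N] [LinearMapClass F R M N]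

theorem eventually_apply_eq_zero_of_mem_span_range {ι : Type*} {l : Filter ι}
    (hl : l ≤ cofinite) (χ : ι → F) (e : ι → M) (he : ∀ i j, i ≠ j → χ j (e i) = 0)
    {x : M} (hx : x ∈ Submodule.span R (Set.range e)) : ∀ᶠ j in l, χ j x = 0 := by
  induction hx using Submodule.span_induction with
  | mem _ hy =>
    obtain ⟨i, rfl⟩ := hy
    filter_upwards [hl (eventually_cofinite_ne i)] with j hj using he i j hj.symm
  | zero => exact Eventually.of_forall fun j => map_zero (χ j)
  | add y z _ _ hy hz =>
    filter_upwards [hy, hz] with j hyj hzj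
    rw [map_add, hyj, hzj, add_zero]
  | smul r y _ hy =>
    filter_upwards [hy] with j hyj
    rw [map_smul, hyj, smul_zero]

end Annihilators

section Separation

variable {𝕜 E : Type*} [NontriviallyNormedField 𝕜] [SeminormedAddCommGroup E] [NormedSpace 𝕜 E]

theorem ContinuousLinearMap.apply_eq_zero_of_mem_span {T : Set (E →L[𝕜] 𝕜)} {φ : E →L[𝕜] 𝕜}
    (hφ : φ ∈ Submodule.span 𝕜 T) {x : E} (hT : ∀ χ ∈ T, χ x = 0) : φ x = 0 :=
  (Submodule.span_le (p := LinearMap.ker (ContinuousLinearMap.apply 𝕜 𝕜 x).toLinearMap)).mpr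
    hT hφ

theorem one_le_mul_norm_sub_of_apply_eq {φ : E →L[𝕜] 𝕜} {C : ℝ} (hφ : ‖φ‖ ≤ C) {g x : E}
    (hg : φ g = 1) (hx : φ x = 0) : 1 ≤ C * ‖g - x‖ :=
  calc (1 : ℝ) = ‖φ (g - x)‖ := by rw [map_sub, hg, hx, sub_zero, norm_one]
    _ ≤ ‖φ‖ * ‖g - x‖ := φ.le_opNorm _
    _ ≤ C * ‖g - x‖ := by gcongr

theorem notMem_closure_of_forall_exists_apply_eq_zero {ι : Type*} (ψ : ι → E →L[𝕜] 𝕜)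
    {C : ℝ} (hbdd : ∀ n, ‖ψ n‖ ≤ C) {g : E} (hg : ∀ n, ψ n g = 1) {S : Set E}
    (hS : ∀ x ∈ S, ∃ n, ψ n x = 0) : g ∉ closure S := by
  have hsub : closure S ⊆ {x | 1 ≤ C * ‖g - x‖} := by
    refine closure_minimal (fun x hx => ?_) (isClosed_le continuous_const (by fun_prop))
    obtain ⟨n, hn⟩ := hS x hx
    exact one_le_mul_norm_sub_of_apply_eq (hbdd n) (hg n) hn
  intro hmem
  have := hsub hmem
  norm_num at this

end Separation

theorem generator_not_in_closed_span_of_idempotents_general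
    {A : Type*} [NormedCommRing A] [NormedAlgebra ℂ A]
    (χ : ℕ → A →L[ℂ] ℂ)
    (a : ℕ → ℕ) (hmono : StrictMono a)
    (ψ : ℕ → A →L[ℂ] ℂ) (C : ℝ) (hbdd : ∀ n, ‖ψ n‖ ≤ C)
    (hspan : ∀ n, ψ n ∈ Submodule.span ℂ
      {φ : A →L[ℂ] ℂ | ∃ j : ℕ, a n < j ∧ j ≤ a (n + 1) ∧ φ = χ j})
    (g : A) (hg : ∀ n, ψ n g = 1)
    (e : ℕ → A) (he : ∀ i j, χ i (e j) = if i = j then 1 else 0) :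
    g ∉ closure (Submodule.span ℂ (Set.range e) : Set A) := by
  refine notMem_closure_of_forall_exists_apply_eq_zero ψ hbdd hg fun x hx => ?_
  have hχx : ∀ᶠ j in atTop, χ j x = 0 :=
    eventually_apply_eq_zero_of_mem_span_range Nat.cofinite_eq_atTop.ge χ e
      (fun i j hij => by rw [he, if_neg hij.symm]) hx
  obtain ⟨N, hN⟩ := eventually_atTop.mp hχx
  refine ⟨N, (ψ N).apply_eq_zero_of_mem_span (hspan N) ?_⟩
  rintro _ ⟨j, hj, -, rfl⟩
  exact hN j (hmono.le_apply.trans hj.le)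

/-- Let `A` be a commutative Banach algebra with characters `χ_n`, let
`(a_n)` be strictly increasing, and suppose `(ψ_n)` is a uniformly bounded sequence of
functionals with `ψ_n ∈ span{χ_j : a_n < j ≤ a_{n+1}}` and `ψ_n(g) = 1`, and that the
`e_j ∈ A` satisfy `χ_i(e_j) = δ_{ij}`. Then `g` is not in the closed linear span of
`{e_j}`. -/
theorem generator_not_in_closed_span_of_idempotents
    {A : Type*} [NormedCommRing A] [NormedAlgebra ℂ A] [CompleteSpace A]
    (χ : ℕ → A →L[ℂ] ℂ) (hmul : ∀ n (x y : A), χ n (x * y) = χ n x * χ n y)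
    (a : ℕ → ℕ) (hmono : StrictMono a)
    (ψ : ℕ → A →L[ℂ] ℂ) (C : ℝ) (hbdd : ∀ n, ‖ψ n‖ ≤ C)
    (hspan : ∀ n, ψ n ∈ Submodule.span ℂ
      {φ : A →L[ℂ] ℂ | ∃ j : ℕ, a n < j ∧ j ≤ a (n + 1) ∧ φ = χ j})
    (g : A) (hg : ∀ n, ψ n g = 1)
    (e : ℕ → A) (he : ∀ i j, χ i (e j) = if i = j then 1 else 0) :
    g ∉ closure (Submodule.span ℂ (Set.range e) : Set A) :=
  generator_not_in_closed_span_of_idempotents_general χ a hmono ψ C hbdd hspan g hg e he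
end
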